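/- Let G be a finite simple graph with m edges, let T = C(m,2) + 1 (where C(m,2) = m(m−1)/2), and let H be the T-copy split gadget of G. Let c' be any total coloring of H and let k be a nonnegative integer. If the number of happy edges of H with respect to c' is at least T·(m + k), then there exists an index i ∈ {1,…,T} such that the number of happy edges of H with one endpoint an edge-vertex and the other endpoint in the i-th copy V(G) × {i} is at least m + k. -/

import Mathlib

/-- The number of happy edges (edges whose endpoints share a color) w.r.t. a total coloring. -/
noncomputable def happyEdgeCount {V Col : Type*} (G : SimpleGraph V) (c : V → Col) : ℕ :=
  {e ∈ G.edgeSet | (Sym2.map c e).IsDiag}.ncard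

/-- The `T`-copy split gadget of a graph: `T` copies of each vertex of `G`, each adjacent to
the edge-vertices of its incident edges, and the edge-vertices form a clique. -/
def SplitGadget {V : Type*} (G : SimpleGraph V) (T : ℕ) :
    SimpleGraph ((V × Fin T) ⊕ G.edgeSet) where
  Adj x y :=
    match x, y with
    | Sum.inl a, Sum.inr e => a.1 ∈ (e : Sym2 V)
    | Sum.inr e, Sum.inl a => a.1 ∈ (e : Sym2 V)
    | Sum.inr e, Sum.inr f => e ≠ f
    | _, _ => False
  symm := by
    constructor
    rintro (a | e) (b | f) h <;> simp_all
    exact fun h' => h h'.symm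
  loopless := by
    constructor
    rintro (a | e) h <;> simp_all


/-!
Every edge of the gadget either lies in the clique on the edge-vertices, which has at most
`C(m,2) = T - 1` edges, or joins an edge-vertex to a single copy. So the happy edges number at
most `T - 1` plus the sum over the `T` copies of their happy cross edges, and a sum of `T` terms
exceeding `T (m + k) - T` forces one term to reach `m + k`.
-/

theorem Fintype.exists_le_of_card_mul_lt_card_add_sum {ι : Type*} [Fintype ι] {n : ℕ}
    (a : ι → ℕ) (h : Fintype.card ι * n < Fintype.card ι + ∑ i, a i) : ∃ i, n ≤ a i := by
  have hsum : ∑ _i : ι, n < ∑ i, (a i + 1) := by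
    simpa [Finset.sum_add_distrib, add_comm] using h
  obtain ⟨i, -, hi⟩ := Finset.exists_lt_of_sum_lt hsum
  exact ⟨i, Nat.lt_succ_iff.mp hi⟩

theorem Set.ncard_iUnion_le_sum {α ι : Type*} [Fintype ι] (s : ι → Set α) :
    (⋃ i, s i).ncard ≤ ∑ i, (s i).ncard := by
  simpa using Finset.set_ncard_biUnion_le Finset.univ s

theorem SimpleGraph.ncard_edgeSet_inr_le {α β : Type*} [Finite β] (H : SimpleGraph (α ⊕ β)) :
    {e ∈ H.edgeSet | ∃ f g : β, e = s(Sum.inr f, Sum.inr g)}.ncard ≤ (Nat.card β).choose 2 := by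
  have hsub : {e ∈ H.edgeSet | ∃ f g : β, e = s(Sum.inr f, Sum.inr g)} ⊆
      Sym2.map Sum.inr '' (Sym2.diagSet : Set (Sym2 β))ᶜ := by
    rintro _ ⟨he, f, g, rfl⟩
    exact ⟨s(f, g), by simpa using H.ne_of_adj he, rfl⟩
  calc _ ≤ (Sym2.map Sum.inr '' (Sym2.diagSet : Set (Sym2 β))ᶜ).ncard :=
        Set.ncard_le_ncard hsub (Set.toFinite _)
    _ ≤ _ := Set.ncard_image_le (Set.toFinite _)
    _ = _ := Sym2.ncard_diagSet_compl β

namespace SplitGadget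

variable {V Col : Type*} (G : SimpleGraph V) {T : ℕ} (c : (V × Fin T) ⊕ G.edgeSet → Col)

theorem edgeSet_subset :
    (SplitGadget G T).edgeSet ⊆ {e | ∃ f g : G.edgeSet, e = s(Sum.inr f, Sum.inr g)} ∪
      ⋃ i, {e | ∃ (u : V) (f : G.edgeSet), e = s(Sum.inl (u, i), Sum.inr f)} := by
  intro e he
  induction e using Sym2.ind with
  | _ x y =>
    rcases x with ⟨u, i⟩ | f <;> rcases y with ⟨v, j⟩ | g
    · exact absurd he (by simp [SplitGadget])
    · exact Or.inr (Set.mem_iUnion.2 ⟨i, u, g, rfl⟩)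
    · exact Or.inr (Set.mem_iUnion.2 ⟨j, v, f, Sym2.eq_swap⟩)
    · exact Or.inl ⟨f, g, rfl⟩

def happyCrossEdges (i : Fin T) : Set (Sym2 ((V × Fin T) ⊕ G.edgeSet)) :=
  {e ∈ (SplitGadget G T).edgeSet | (Sym2.map c e).IsDiag ∧
    ∃ (u : V) (f : G.edgeSet), e = s(Sum.inl (u, i), Sum.inr f)}

theorem happyEdgeCount_le [Finite V] :
    happyEdgeCount (SplitGadget G T) c ≤
      G.edgeSet.ncard.choose 2 + ∑ i, (happyCrossEdges G c i).ncard := by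
  have hsub : {e ∈ (SplitGadget G T).edgeSet | (Sym2.map c e).IsDiag} ⊆
      {e ∈ (SplitGadget G T).edgeSet | ∃ f g : G.edgeSet, e = s(Sum.inr f, Sum.inr g)} ∪
        ⋃ i, happyCrossEdges G c i := by
    rintro e ⟨he, hc⟩
    rcases edgeSet_subset G he with hinr | hinl
    · exact Or.inl ⟨he, hinr⟩
    · obtain ⟨i, hi⟩ := Set.mem_iUnion.1 hinl
      exact Or.inr (Set.mem_iUnion.2 ⟨i, he, hc, hi⟩)
  calc happyEdgeCount (SplitGadget G T) c ≤ _ := Set.ncard_le_ncard hsub (Set.toFinite _)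
    _ ≤ _ := Set.ncard_union_le _ _
    _ ≤ _ := by
      gcongr
      · simpa using (SplitGadget G T).ncard_edgeSet_inr_le
      · exact Set.ncard_iUnion_le_sum _

end SplitGadget

theorem splitGadget_happyEdges_copy_general
    {V Col : Type*} [Fintype V] (G : SimpleGraph V)
    (T : ℕ) (hT : T = Nat.choose G.edgeSet.ncard 2 + 1)
    (c' : ((V × Fin T) ⊕ G.edgeSet) → Col) (k : ℕ)
    (h : T * (G.edgeSet.ncard + k) ≤ happyEdgeCount (SplitGadget G T) c') :
    ∃ i : Fin T, G.edgeSet.ncard + k ≤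
      {e ∈ (SplitGadget G T).edgeSet | (Sym2.map c' e).IsDiag ∧
        ∃ (u : V) (f : G.edgeSet), e = s(Sum.inl (u, i), Sum.inr f)}.ncard := by
  have hcount := SplitGadget.happyEdgeCount_le G c'
  refine Fintype.exists_le_of_card_mul_lt_card_add_sum _ ?_
  rw [Fintype.card_fin]
  unfold SplitGadget.happyCrossEdges at hcount
  omega

/-- Let `T = C(m,2) + 1` and let `c'` be a total coloring of the `T`-copy split gadget `H` of
`G` with at least `T * (m + k)` happy edges.  Then for some copy index `i`, the number of happy
edges of `H` joining an edge-vertex to a vertex of the `i`-th copy is at least `m + k`. -/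
theorem splitGadget_happyEdges_copy
    {V Col : Type*} [Fintype V] [DecidableEq V] (G : SimpleGraph V) [DecidableRel G.Adj]
    (T : ℕ) (hT : T = Nat.choose G.edgeSet.ncard 2 + 1)
    (c' : ((V × Fin T) ⊕ G.edgeSet) → Col) (k : ℕ)
    (h : T * (G.edgeSet.ncard + k) ≤ happyEdgeCount (SplitGadget G T) c') :
    ∃ i : Fin T, G.edgeSet.ncard + k ≤
      {e ∈ (SplitGadget G T).edgeSet | (Sym2.map c' e).IsDiag ∧
        ∃ (u : V) (f : G.edgeSet), e = s(Sum.inl (u, i), Sum.inr f)}.ncard :=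
  splitGadget_happyEdges_copy_general G T hT c' k h
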